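/- Let n ≥ 1 and let H_n be the Bleimann–Butzer–Hahn operator, H_n f(x) := (1+x)^{−n} ∑_{k=0}^n C(n,k)·x^k·f(k/(n−k+1)) for x ≥ 0. Then for all bounded continuous f, g : [0,∞) → ℝ and all x ≥ 0, |H_n(f·g)(x) − H_n f(x)·H_n g(x)| ≤ (1/2)·(1 − (1/4^n)·C(2n,n))·osc_{H_n}(f)·osc_{H_n}(g), where osc_{H_n}(f) := max{|f(k/(n−k+1)) − f(l/(n−l+1))| : 0 ≤ k < l ≤ n} and similarly for g. -/

import Mathlib

/-!
`H_n` averages the values of a function at the nodes `k / (n - k + 1)` with the probability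
weights `p_k = C(n,k) x^k / (1+x)^n`, so Korkine's identity for the weighted covariance gives the
Grüss-type bound `½ (1 - ∑ p_k²) osc f osc g`. It remains to bound `∑ p_k²` from below by
`C(2n,n) / 4^n`, its value at `x = 1`. With `ζ` a primitive `(2n+1)`-st root of unity, discrete
Parseval gives `(2n+1) ∑ C(n,k)² y^{2k} = ∑_r |1 + y ζ^r|^{2n}`, and on the unit circle
`|1 + y ω|² = ((1+y)/2)² |1 + ω|² + ((1-y)/2)² |1 - ω|² ≥ ((1+y)/2)² |1 + ω|²`; summing over `r`
compares the general case with the case `y = 1`.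
-/

/-- The `n`-th Bleimann–Butzer–Hahn operator
`H_n f(x) = (1+x)^(-n) ∑_{k=0}^n C(n,k) x^k f(k/(n-k+1))`. -/
noncomputable def bbhOp (n : ℕ) (f : ℝ → ℝ) (x : ℝ) : ℝ :=
  (1 / (1 + x) ^ n) * ∑ k ∈ Finset.range (n + 1),
    (n.choose k : ℝ) * x ^ k * f ((k : ℝ) / ((n : ℝ) - k + 1))

open Finset ComplexConjugate

namespace Finset

variable {ι : Type*} (s : Finset ι) {p : ι → ℝ} (a b : ι → ℝ)

theorem sum_mul_sub_sum_mul_sum_eq_half_sum_sum (hp : ∑ i ∈ s, p i = 1) :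
    ∑ i ∈ s, p i * (a i * b i) - (∑ i ∈ s, p i * a i) * ∑ i ∈ s, p i * b i =
      1 / 2 * ∑ i ∈ s, ∑ j ∈ s, p i * p j * ((a i - a j) * (b i - b j)) := by
  have expand : ∀ i j, p i * p j * ((a i - a j) * (b i - b j)) =
      p i * (a i * b i) * p j + p i * (p j * (a j * b j)) - p i * a i * (p j * b j)
        - p i * b i * (p j * a j) := fun i j => by ring
  simp only [expand, sum_add_distrib, sum_sub_distrib, ← mul_sum, ← sum_mul, hp]
  ring

theorem abs_sum_mul_sub_sum_mul_sum_le (hp0 : ∀ i ∈ s, 0 ≤ p i) (hp : ∑ i ∈ s, p i = 1)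
    {A B : ℝ} (ha : ∀ i ∈ s, ∀ j ∈ s, |a i - a j| ≤ A)
    (hb : ∀ i ∈ s, ∀ j ∈ s, |b i - b j| ≤ B) :
    |∑ i ∈ s, p i * (a i * b i) - (∑ i ∈ s, p i * a i) * ∑ i ∈ s, p i * b i| ≤
      1 / 2 * (1 - ∑ i ∈ s, p i ^ 2) * A * B := by
  classical
  obtain ⟨i₀, hi₀⟩ : s.Nonempty := nonempty_of_sum_ne_zero (hp ▸ one_ne_zero)
  have hA : 0 ≤ A := (abs_nonneg _).trans (ha i₀ hi₀ i₀ hi₀)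
  have hB : 0 ≤ B := (abs_nonneg _).trans (hb i₀ hi₀ i₀ hi₀)
  have term : ∀ i ∈ s, ∀ j ∈ s, |p i * p j * ((a i - a j) * (b i - b j))| ≤
      p i * p j * (A * B) - if i = j then p i * p j * (A * B) else 0 := by
    intro i hi j hj
    split_ifs with hij
    · simp [hij]
    · rw [sub_zero, abs_mul, abs_mul, abs_mul, abs_of_nonneg (hp0 i hi), abs_of_nonneg (hp0 j hj)]
      have := mul_nonneg (hp0 i hi) (hp0 j hj)
      gcongr
      exacts [ha i hi j hj, hb i hi j hj]
  have off_diag : ∑ i ∈ s, ∑ j ∈ s,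
      (p i * p j * (A * B) - if i = j then p i * p j * (A * B) else 0) =
        (1 - ∑ i ∈ s, p i ^ 2) * (A * B) := by
    simp only [sum_sub_distrib, sum_ite_eq, sum_ite_mem, inter_self, ← mul_sum, ← sum_mul, hp, sq]
    ring
  rw [sum_mul_sub_sum_mul_sum_eq_half_sum_sum s a b hp, abs_mul, abs_of_pos one_half_pos]
  calc 1 / 2 * |∑ i ∈ s, ∑ j ∈ s, p i * p j * ((a i - a j) * (b i - b j))|
      ≤ 1 / 2 * ∑ i ∈ s, ∑ j ∈ s, |p i * p j * ((a i - a j) * (b i - b j))| := by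
        gcongr
        exact (abs_sum_le_sum_abs _ _).trans (sum_le_sum fun i _ => abs_sum_le_sum_abs _ _)
    _ ≤ 1 / 2 * ((1 - ∑ i ∈ s, p i ^ 2) * (A * B)) := by
        rw [← off_diag]
        gcongr with i hi j hj
        exact term i hi j hj
    _ = 1 / 2 * (1 - ∑ i ∈ s, p i ^ 2) * A * B := by ring

end Finset

theorem abs_sub_le_sSup_abs_sub (a : ℕ → ℝ) {n k l : ℕ} (hk : k ≤ n) (hl : l ≤ n) :
    |a k - a l| ≤ sSup {d : ℝ | ∃ k l : ℕ, k < l ∧ l ≤ n ∧ d = |a k - a l|} := by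
  set S := {d : ℝ | ∃ k l : ℕ, k < l ∧ l ≤ n ∧ d = |a k - a l|}
  have hS : BddAbove S := by
    refine (((Set.finite_Iic n).prod (Set.finite_Iic n)).image
      fun kl : ℕ × ℕ => |a kl.1 - a kl.2|).subset ?_ |>.bddAbove
    rintro _ ⟨k, l, hkl, hln, rfl⟩
    exact ⟨(k, l), ⟨hkl.le.trans hln, hln⟩, rfl⟩
  rcases lt_trichotomy k l with hkl | rfl | hlk
  · exact le_csSup hS ⟨k, l, hkl, hl, rfl⟩
  · rw [sub_self, abs_zero]
    exact Real.sSup_nonneg fun _ ⟨_, _, _, _, hd⟩ => hd ▸ abs_nonneg _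
  · exact abs_sub_comm (a k) (a l) ▸ le_csSup hS ⟨l, k, hlk, hk, rfl⟩

theorem Complex.normSq_one_add_ofReal_mul {ω : ℂ} (hω : ‖ω‖ = 1) (y : ℝ) :
    normSq (1 + y * ω) = ((1 + y) / 2) ^ 2 * normSq (1 + ω) + ((1 - y) / 2) ^ 2 * normSq (1 - ω) := by
  have h : ω.re ^ 2 + ω.im ^ 2 = 1 := by
    have := normSq_eq_norm_sq ω
    rw [hω, normSq_apply] at this
    linear_combination this
  simp only [normSq_apply, add_re, add_im, sub_re, sub_im, mul_re, mul_im, ofReal_re, ofReal_im,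
    one_re, one_im]
  linear_combination (y ^ 2 - 1) / 2 * h

namespace IsPrimitiveRoot

theorem sum_pow_mul_inv_pow_pow {K : Type*} [Field K] {ζ : K} {N : ℕ} (hζ : IsPrimitiveRoot ζ N)
    {k l : ℕ} (hk : k < N) (hl : l < N) :
    ∑ r ∈ range N, (ζ ^ k * ζ⁻¹ ^ l) ^ r = if k = l then (N : K) else 0 := by
  have hζ0 : ζ ≠ 0 := hζ.ne_zero (by omega)
  split_ifs with hkl
  · simp [hkl, hζ0]
  · have hN : (ζ ^ k * ζ⁻¹ ^ l) ^ N = 1 := by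
      rw [mul_pow, ← pow_mul, ← pow_mul, mul_comm k, mul_comm l, pow_mul, pow_mul, inv_pow,
        hζ.pow_eq_one, one_pow, inv_one, one_pow, mul_one]
    have hne : ζ ^ k * ζ⁻¹ ^ l ≠ 1 := by
      rw [inv_pow, Ne, mul_inv_eq_one₀ (pow_ne_zero _ hζ0)]
      exact fun h => hkl (hζ.pow_inj hk hl h)
    rw [geom_sum_eq hne, hN, sub_self, zero_div]

theorem sum_normSq_sum_mul_pow {ζ : ℂ} {N : ℕ} (hζ : IsPrimitiveRoot ζ N) (c : ℕ → ℂ) {m : ℕ}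
    (hm : m ≤ N) :
    ∑ r ∈ range N, Complex.normSq (∑ k ∈ range m, c k * (ζ ^ r) ^ k) =
      N * ∑ k ∈ range m, Complex.normSq (c k) := by
  rcases Nat.eq_zero_or_pos N with rfl | hN
  · simp [Nat.le_zero.mp hm]
  have hconj : conj ζ = ζ⁻¹ := (Complex.inv_eq_conj (hζ.norm'_eq_one hN.ne')).symm
  have hlt : ∀ k ∈ range m, k < N := fun k hk => (mem_range.mp hk).trans_le hm
  apply Complex.ofReal_injective
  push_cast
  simp only [← Complex.mul_conj, map_sum, map_mul, map_pow, hconj]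
  simp only [sum_mul_sum]
  calc ∑ r ∈ range N, ∑ k ∈ range m, ∑ l ∈ range m,
        c k * (ζ ^ r) ^ k * (conj (c l) * (ζ⁻¹ ^ r) ^ l)
      = ∑ k ∈ range m, ∑ l ∈ range m,
          c k * conj (c l) * ∑ r ∈ range N, (ζ ^ k * ζ⁻¹ ^ l) ^ r := by
        rw [sum_comm]
        refine sum_congr rfl fun k _ => ?_
        rw [sum_comm]
        refine sum_congr rfl fun l _ => ?_
        rw [mul_sum]
        refine sum_congr rfl fun r _ => ?_
        ring
    _ = ∑ k ∈ range m, ∑ l ∈ range m, if k = l then c k * conj (c l) * N else 0 := by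
        refine sum_congr rfl fun k hk => sum_congr rfl fun l hl => ?_
        rw [hζ.sum_pow_mul_inv_pow_pow (hlt k hk) (hlt l hl), mul_ite, mul_zero]
    _ = N * ∑ k ∈ range m, c k * conj (c k) := by
        rw [mul_sum]
        refine sum_congr rfl fun k hk => ?_
        rw [sum_ite_eq, if_pos hk, mul_comm]

theorem sum_normSq_one_add_mul_pow_pow {ζ : ℂ} {n : ℕ} (hζ : IsPrimitiveRoot ζ (2 * n + 1))
    (y : ℝ) :
    ∑ r ∈ range (2 * n + 1), Complex.normSq (1 + y * ζ ^ r) ^ n =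
      (2 * n + 1) * ∑ k ∈ range (n + 1), (n.choose k : ℝ) ^ 2 * y ^ (2 * k) := by
  have expand : ∀ r, (1 + y * ζ ^ r) ^ n =
      ∑ k ∈ range (n + 1), (((n.choose k : ℝ) * y ^ k : ℝ) : ℂ) * (ζ ^ r) ^ k := fun r => by
    rw [add_comm, add_pow]
    refine sum_congr rfl fun k _ => ?_
    push_cast
    ring
  simp only [← map_pow, expand, hζ.sum_normSq_sum_mul_pow _ (by omega : n + 1 ≤ 2 * n + 1),
    Complex.normSq_ofReal]
  push_cast
  exact congrArg _ (sum_congr rfl fun k _ => by ring)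

end IsPrimitiveRoot

theorem choose_mul_add_div_two_pow_le_sum_choose_sq_mul_pow (n : ℕ) (y : ℝ) :
    ((2 * n).choose n : ℝ) * ((1 + y) / 2) ^ (2 * n) ≤
      ∑ k ∈ range (n + 1), (n.choose k : ℝ) ^ 2 * y ^ (2 * k) := by
  obtain ⟨ζ, hζ⟩ : ∃ ζ : ℂ, IsPrimitiveRoot ζ (2 * n + 1) :=
    ⟨_, Complex.isPrimitiveRoot_exp _ (by omega)⟩
  have hvandermonde : ∑ k ∈ range (n + 1), (n.choose k : ℝ) ^ 2 = (2 * n).choose n := by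
    exact_mod_cast Nat.sum_range_choose_sq n
  have hcentral := hζ.sum_normSq_one_add_mul_pow_pow 1
  simp only [Complex.ofReal_one, one_mul, one_pow, mul_one, hvandermonde] at hcentral
  suffices h : (2 * n + 1 : ℝ) * ((2 * n).choose n * ((1 + y) / 2) ^ (2 * n)) ≤
      (2 * n + 1) * ∑ k ∈ range (n + 1), (n.choose k : ℝ) ^ 2 * y ^ (2 * k) from
    le_of_mul_le_mul_left h (by positivity)
  calc (2 * n + 1 : ℝ) * ((2 * n).choose n * ((1 + y) / 2) ^ (2 * n))
      = ∑ r ∈ range (2 * n + 1), (((1 + y) / 2) ^ 2 * Complex.normSq (1 + ζ ^ r)) ^ n := by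
        simp only [mul_pow, ← mul_sum, hcentral, ← pow_mul]
        ring
    _ ≤ ∑ r ∈ range (2 * n + 1), Complex.normSq (1 + y * ζ ^ r) ^ n := by
        refine sum_le_sum fun r _ =>
          pow_le_pow_left₀ (mul_nonneg (sq_nonneg _) (Complex.normSq_nonneg _)) ?_ n
        rw [Complex.normSq_one_add_ofReal_mul
          (by rw [norm_pow, hζ.norm'_eq_one (by omega), one_pow])]
        exact le_add_of_nonneg_right (mul_nonneg (sq_nonneg _) (Complex.normSq_nonneg _))
    _ = _ := hζ.sum_normSq_one_add_mul_pow_pow y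

noncomputable def bbhWeight (n : ℕ) (x : ℝ) (k : ℕ) : ℝ :=
  n.choose k * x ^ k / (1 + x) ^ n

theorem bbhOp_eq_sum (n : ℕ) (f : ℝ → ℝ) (x : ℝ) :
    bbhOp n f x = ∑ k ∈ range (n + 1), bbhWeight n x k * f (k / (n - k + 1)) := by
  rw [bbhOp, mul_sum]
  exact sum_congr rfl fun k _ => by rw [bbhWeight]; ring

theorem bbhWeight_nonneg (n : ℕ) {x : ℝ} (hx : 0 ≤ x) (k : ℕ) : 0 ≤ bbhWeight n x k := by
  unfold bbhWeight
  positivity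

theorem sum_bbhWeight (n : ℕ) {x : ℝ} (hx : 1 + x ≠ 0) :
    ∑ k ∈ range (n + 1), bbhWeight n x k = 1 := by
  simp only [bbhWeight, ← sum_div]
  rw [div_eq_one_iff_eq (pow_ne_zero n hx), add_comm 1 x, add_pow]
  simp only [one_pow, mul_one, mul_comm]

theorem choose_div_four_pow_le_sum_bbhWeight_sq (n : ℕ) {x : ℝ} (hx : 1 + x ≠ 0) :
    1 / 4 ^ n * ((2 * n).choose n : ℝ) ≤ ∑ k ∈ range (n + 1), bbhWeight n x k ^ 2 := by
  have hsq : ∑ k ∈ range (n + 1), bbhWeight n x k ^ 2 =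
      (∑ k ∈ range (n + 1), (n.choose k : ℝ) ^ 2 * x ^ (2 * k)) / (1 + x) ^ (2 * n) := by
    simp only [bbhWeight, sum_div, div_pow, mul_pow, ← pow_mul, mul_comm _ 2]
  have hfour : (4 : ℝ) ^ n = 2 ^ (2 * n) := by rw [pow_mul]; norm_num
  rw [hsq, le_div_iff₀ ((even_two_mul n).pow_pos hx), hfour]
  calc 1 / 2 ^ (2 * n) * ((2 * n).choose n : ℝ) * (1 + x) ^ (2 * n)
      = (2 * n).choose n * ((1 + x) / 2) ^ (2 * n) := by rw [div_pow]; ring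
    _ ≤ _ := choose_mul_add_div_two_pow_le_sum_choose_sq_mul_pow n x

theorem bbh_chebyshev_gruss (n : ℕ)
    (f g : ℝ → ℝ)
    (x : ℝ) (hx : 0 ≤ x) :
    |bbhOp n (fun t => f t * g t) x - bbhOp n f x * bbhOp n g x| ≤
      (1 / 2) * (1 - (1 / 4 ^ n : ℝ) * ((2 * n).choose n : ℝ)) *
        sSup {d : ℝ | ∃ k l : ℕ, k < l ∧ l ≤ n ∧
          d = |f ((k : ℝ) / ((n : ℝ) - k + 1)) - f ((l : ℝ) / ((n : ℝ) - l + 1))|} *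
        sSup {d : ℝ | ∃ k l : ℕ, k < l ∧ l ≤ n ∧
          d = |g ((k : ℝ) / ((n : ℝ) - k + 1)) - g ((l : ℝ) / ((n : ℝ) - l + 1))|} := by
  have hx1 : 1 + x ≠ 0 := by positivity
  have hosc : ∀ a : ℕ → ℝ, ∀ k ∈ range (n + 1), ∀ l ∈ range (n + 1),
      |a k - a l| ≤ sSup {d : ℝ | ∃ k l : ℕ, k < l ∧ l ≤ n ∧ d = |a k - a l|} :=
    fun a k hk l hl =>
      abs_sub_le_sSup_abs_sub a (mem_range_succ_iff.mp hk) (mem_range_succ_iff.mp hl)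
  have hosc_nonneg : ∀ a : ℕ → ℝ,
      0 ≤ sSup {d : ℝ | ∃ k l : ℕ, k < l ∧ l ≤ n ∧ d = |a k - a l|} := fun a =>
    (abs_nonneg _).trans (hosc a 0 (by simp) 0 (by simp))
  simp only [bbhOp_eq_sum]
  refine (abs_sum_mul_sub_sum_mul_sum_le _ (fun k : ℕ => f (k / (n - k + 1)))
    (fun k : ℕ => g (k / (n - k + 1))) (fun k _ => bbhWeight_nonneg n hx k)
    (sum_bbhWeight n hx1) (hosc _) (hosc _)).trans ?_
  gcongr
  exacts [hosc_nonneg _, hosc_nonneg _, choose_div_four_pow_le_sum_bbhWeight_sq n hx1]
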